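/- Let S be a finite non-nested set of intervals, let t be a natural number, and let j = |{(d, a) ∈ S : a ≤ t}|. If j ≥ 1, then the pair (d*, a*), where d* is the j-th smallest departure of S and a* is the j-th smallest arrival of S, is a member of S, satisfies a* ≤ t, and is the latest interval of S ending by time t: every (d, a) ∈ S with a ≤ t satisfies a ≤ a* and d ≤ d*. (Correctness of the find_prev algorithm on the two-bit-vector representation.) -/

import Mathlib

/-!
In a non-nested set the order of departures agrees with the order of arrivals, so an interval
`I ∈ S` has the same rank among departures as among arrivals. The interval `I₀` with the
latest arrival `≤ t` has rank exactly `j` among arrivals, hence `I₀` is the pair of the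
`j`-th smallest departure and the `j`-th smallest arrival.
-/

/-- An interval `I = (d, a)` is contained in `I' = (d', a')` if `d' ≤ d` and `a ≤ a'`. -/
def Contained (I I' : ℕ × ℕ) : Prop := I'.1 ≤ I.1 ∧ I.2 ≤ I'.2

/-- A finite set of intervals is non-nested if no member is contained in a distinct member. -/
def NonNested (S : Finset (ℕ × ℕ)) : Prop :=
  ∀ I ∈ S, ∀ I' ∈ S, I ≠ I' → ¬ Contained I I' ∧ ¬ Contained I' I

/-- The `i`-th smallest element (1-indexed) of a finite set of naturals. -/
def nthSmallest (T : Finset ℕ) (i : ℕ) : ℕ := (T.sort (· ≤ ·)).getD (i - 1) 0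

open Finset

theorem nthSmallest_eq_nth (T : Finset ℕ) (i : ℕ) :
    nthSmallest T i = Nat.nth (· ∈ T) (i - 1) := by
  have hT : (Set.ofPred (· ∈ T)).Finite := T.finite_toSet
  rw [Nat.nth_eq_getD_sort hT, nthSmallest]
  congr
  ext
  simp

theorem nthSmallest_card_filter_le {T : Finset ℕ} {x : ℕ} (hx : x ∈ T) :
    nthSmallest T #{y ∈ T | y ≤ x} = x := by
  have hcount : Nat.count (· ∈ T) x + 1 = #{y ∈ T | y ≤ x} := by
    rw [← Nat.count_succ_eq_succ_count hx, Nat.count_eq_card_filter_range]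
    congr 1
    ext y
    simp [and_comm]
  rw [nthSmallest_eq_nth, ← hcount, Nat.add_sub_cancel, Nat.nth_count hx]

theorem card_filter_image_le {α : Type*} {S : Finset α} {f : α → ℕ} (hf : Set.InjOn f S)
    (x : ℕ) : #{y ∈ S.image f | y ≤ x} = #{I ∈ S | f I ≤ x} := by
  rw [filter_image, card_image_of_injOn (hf.mono (filter_subset _ _))]

namespace NonNested

theorem fst_le_iff_snd_le {S : Finset (ℕ × ℕ)} (hS : NonNested S) {I J : ℕ × ℕ} (hI : I ∈ S) (hJ : J ∈ S) :
    I.1 ≤ J.1 ↔ I.2 ≤ J.2 := by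
  by_cases hIJ : I = J
  · simp [hIJ]
  · have := hS I hI J hJ hIJ
    unfold Contained at this
    omega

theorem injOn_fst {S : Finset (ℕ × ℕ)} (hS : NonNested S) :
    Set.InjOn Prod.fst (S : Set (ℕ × ℕ)) := fun _ hI _ hJ h =>
  Prod.ext h <| le_antisymm ((hS.fst_le_iff_snd_le hI hJ).1 h.le)
    ((hS.fst_le_iff_snd_le hJ hI).1 h.ge)

theorem injOn_snd {S : Finset (ℕ × ℕ)} (hS : NonNested S) :
    Set.InjOn Prod.snd (S : Set (ℕ × ℕ)) := fun _ hI _ hJ h =>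
  Prod.ext (le_antisymm ((hS.fst_le_iff_snd_le hI hJ).2 h.le)
    ((hS.fst_le_iff_snd_le hJ hI).2 h.ge)) h

theorem nthSmallest_card_filter_snd_le {S : Finset (ℕ × ℕ)} (hS : NonNested S) {I : ℕ × ℕ} (hI : I ∈ S) :
    nthSmallest (S.image Prod.fst) #{J ∈ S | J.2 ≤ I.2} = I.1 ∧
      nthSmallest (S.image Prod.snd) #{J ∈ S | J.2 ≤ I.2} = I.2 := by
  have hrank : #{J ∈ S | J.2 ≤ I.2} = #{J ∈ S | J.1 ≤ I.1} :=
    congrArg card <| filter_congr fun J hJ => (hS.fst_le_iff_snd_le hJ hI).symm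
  constructor
  · rw [hrank, ← card_filter_image_le hS.injOn_fst]
    exact nthSmallest_card_filter_le (mem_image_of_mem _ hI)
  · rw [← card_filter_image_le hS.injOn_snd]
    exact nthSmallest_card_filter_le (mem_image_of_mem _ hI)

end NonNested

theorem stmt4_general (S : Finset (ℕ × ℕ)) (hnn : NonNested S)
    (t : ℕ) (j : ℕ) (hj : j = (S.filter (fun I => I.2 ≤ t)).card) (hj1 : 1 ≤ j) :
    (nthSmallest (S.image Prod.fst) j, nthSmallest (S.image Prod.snd) j) ∈ S ∧
    nthSmallest (S.image Prod.snd) j ≤ t ∧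
    (∀ I ∈ S, I.2 ≤ t →
      I.2 ≤ nthSmallest (S.image Prod.snd) j ∧ I.1 ≤ nthSmallest (S.image Prod.fst) j) := by
  have hne : (S.filter (fun I => I.2 ≤ t)).Nonempty := card_pos.1 (hj ▸ hj1)
  obtain ⟨I₀, hI₀, hmax⟩ := exists_max_image _ Prod.snd hne
  obtain ⟨hI₀S, hI₀t⟩ := mem_filter.1 hI₀
  have hmax' : ∀ I ∈ S, I.2 ≤ t → I.2 ≤ I₀.2 := fun I hI hIt => hmax I (mem_filter.2 ⟨hI, hIt⟩)
  have hrank : #{J ∈ S | J.2 ≤ I₀.2} = j :=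
    hj ▸ congrArg card (filter_congr fun J hJ => ⟨(·.trans hI₀t), hmax' J hJ⟩)
  obtain ⟨hfst, hsnd⟩ := hnn.nthSmallest_card_filter_snd_le hI₀S
  rw [hrank] at hfst hsnd
  rw [hfst, hsnd]
  exact ⟨hI₀S, hI₀t, fun I hI hIt =>
    ⟨hmax' I hI hIt, (hnn.fst_le_iff_snd_le hI hI₀S).2 (hmax' I hI hIt)⟩⟩

theorem stmt4 (S : Finset (ℕ × ℕ)) (hval : ∀ I ∈ S, I.1 ≤ I.2) (hnn : NonNested S)
    (t : ℕ) (j : ℕ) (hj : j = (S.filter (fun I => I.2 ≤ t)).card) (hj1 : 1 ≤ j) :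
    (nthSmallest (S.image Prod.fst) j, nthSmallest (S.image Prod.snd) j) ∈ S ∧
    nthSmallest (S.image Prod.snd) j ≤ t ∧
    (∀ I ∈ S, I.2 ≤ t →
      I.2 ≤ nthSmallest (S.image Prod.snd) j ∧ I.1 ≤ nthSmallest (S.image Prod.fst) j) :=
  stmt4_general S hnn t j hj hj1
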